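/- arXiv:1002.4801 — 5 statements merged into one kernel-verified Lean document; each statement's English description precedes it below -/
import Mathlib

section
/- Let a : ℤ → ℝ be not identically zero and satisfy |a_k| ≤ c λ^{|k|} for all k ∈ ℤ, for some c > 0 and 0 < λ < 1. Define φ₂(x) = Σ_{k∈ℤ} a_k N₂(x − k), where N₂ is the linear B-spline, and set σ₂²(t) = Σ_{k∈ℤ} φ₂²(t − k). Then σ₂² attains its absolute maximum over ℝ exactly at the integer points t = l ∈ ℤ, and the maximal value is σ₂²(l) = Σ_{k∈ℤ} a_k². -/
noncomputable section

/-- The linear B-spline `N₂ = 1_{[0,1]} ∗ 1_{[0,1]}`. -/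
def N2 (x : ℝ) : ℝ :=
  if 0 ≤ x ∧ x ≤ 1 then x else if 1 ≤ x ∧ x ≤ 2 then 2 - x else 0

/-- `φ₂ = Σ_k a_k N₂(· − k)`. -/
def phi2 (a : ℤ → ℝ) (x : ℝ) : ℝ := ∑' k : ℤ, a k * N2 (x - k)

/-- The variance function `σ₂²(t) = Σ_k φ₂²(t − k)`. -/
def sigma2sq (a : ℤ → ℝ) (t : ℝ) : ℝ := ∑' k : ℤ, (phi2 a (t - k)) ^ 2

lemma N2_eq_zero_of_nonpos {x : ℝ} (h : x ≤ 0) : N2 x = 0 := by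
  unfold N2; split_ifs with h1 h2 <;> [linarith [h1.1]; linarith [h2.1]; rfl]

lemma N2_eq_zero_of_two_le {x : ℝ} (h : 2 ≤ x) : N2 x = 0 := by
  unfold N2; split_ifs with h1 h2 <;> [linarith [h1.2]; linarith [h2.2]; rfl]

lemma N2_fract {u : ℝ} (h0 : 0 ≤ u) (h1 : u < 1) : N2 u = u := by
  unfold N2; rw [if_pos ⟨h0, h1.le⟩]

lemma N2_fract_add_one {u : ℝ} (h0 : 0 ≤ u) (h1 : u < 1) : N2 (u + 1) = 1 - u := by
  unfold N2; split_ifs with hh1 hh2 <;> [linarith [hh1.2]; linarith; exact absurd ⟨by linarith, by linarith⟩ hh2]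

/-- Pointwise formula for `φ₂`. -/
lemma phi2_eq (a : ℤ → ℝ) (x : ℝ) :
    phi2 a x = (1 - Int.fract x) * a (⌊x⌋ - 1) + Int.fract x * a ⌊x⌋ := by
  set m : ℤ := ⌊x⌋ with hm
  set u : ℝ := Int.fract x with hu
  have hu0 : 0 ≤ u := Int.fract_nonneg x
  have hu1 : u < 1 := Int.fract_lt_one x
  have hx : (m : ℝ) + u = x := Int.floor_add_fract x
  have hsupp : ∀ k : ℤ, k ∉ ({m - 1, m} : Finset ℤ) → a k * N2 (x - k) = 0 := by
    intro k hk
    simp only [Finset.mem_insert, Finset.mem_singleton] at hk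
    push_neg at hk
    rcases (by omega : k ≤ m - 2 ∨ m + 1 ≤ k) with h | h
    · have : (2 : ℝ) ≤ x - k := by
        have : (k : ℝ) ≤ (m : ℝ) - 2 := by exact_mod_cast (Int.cast_le.mpr h : (k : ℝ) ≤ ((m - 2 : ℤ) : ℝ))
        push_cast at this ⊢; linarith
      rw [N2_eq_zero_of_two_le this, mul_zero]
    · have : x - k ≤ 0 := by
        have : ((m : ℝ) + 1) ≤ (k : ℝ) := by exact_mod_cast (by push_cast; exact_mod_cast h : ((m + 1 : ℤ) : ℝ) ≤ (k : ℝ))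
        push_cast at this ⊢; linarith
      rw [N2_eq_zero_of_nonpos this, mul_zero]
  have hne : m - 1 ≠ m := by omega
  rw [phi2, tsum_eq_sum hsupp, Finset.sum_pair hne]
  have e1 : x - ((m - 1 : ℤ) : ℝ) = u + 1 := by push_cast; linarith
  have e2 : x - (m : ℝ) = u := by linarith
  rw [e1, e2, N2_fract hu0 hu1, N2_fract_add_one hu0 hu1]
  ring

section Main

variable {a : ℤ → ℝ}

lemma shift_summable (hS : Summable fun k : ℤ => (a k) ^ 2) :
    Summable fun m : ℤ => (a (m - 1)) ^ 2 := by
  have := (Equiv.subRight (1 : ℤ)).summable_iff.mpr hS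
  simpa [Equiv.subRight_apply, Function.comp_def] using this

lemma shift_tsum : (∑' m : ℤ, (a (m - 1)) ^ 2) = ∑' k : ℤ, (a k) ^ 2 := by
  have := (Equiv.subRight (1 : ℤ)).tsum_eq (fun k : ℤ => (a k) ^ 2)
  simpa [Equiv.subRight_apply] using this

lemma diff_summable (hS : Summable fun k : ℤ => (a k) ^ 2) :
    Summable fun m : ℤ => (a m - a (m - 1)) ^ 2 := by
  refine Summable.of_nonneg_of_le (fun m => sq_nonneg _) (fun m => ?_)
    ((hS.mul_left 2).add ((shift_summable hS).mul_left 2))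
  nlinarith [sq_nonneg (a m + a (m - 1))]

/-- The key identity: `σ₂²(t) = S − u(1−u)·D` where `u` is the fractional part of `t`. -/
lemma sigma2sq_formula (hS : Summable fun k : ℤ => (a k) ^ 2) (t : ℝ) :
    sigma2sq a t = (∑' k : ℤ, (a k) ^ 2) -
      Int.fract t * (1 - Int.fract t) * ∑' m : ℤ, (a m - a (m - 1)) ^ 2 := by
  set u : ℝ := Int.fract t with hu
  have step1 : sigma2sq a t = ∑' m : ℤ, ((1 - u) * a (m - 1) + u * a m) ^ 2 := by
    rw [sigma2sq]
    have hcongr : ∀ j : ℤ, (phi2 a (t - j)) ^ 2 =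
        (fun m : ℤ => ((1 - u) * a (m - 1) + u * a m) ^ 2) (⌊t⌋ - j) := by
      intro j
      rw [phi2_eq]
      have h1 : ⌊t - (j : ℝ)⌋ = ⌊t⌋ - j := Int.floor_sub_intCast t j
      have h2 : Int.fract (t - (j : ℝ)) = u := Int.fract_sub_intCast t j
      rw [h1, h2]
    rw [tsum_congr hcongr]
    have := (Equiv.subLeft (⌊t⌋ : ℤ)).tsum_eq (fun m : ℤ => ((1 - u) * a (m - 1) + u * a m) ^ 2)
    simpa [Equiv.subLeft_apply] using this
  have hptwise : ∀ m : ℤ, ((1 - u) * a (m - 1) + u * a m) ^ 2 =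
      (1 - u) * (a (m - 1)) ^ 2 + u * (a m) ^ 2 - u * (1 - u) * (a m - a (m - 1)) ^ 2 := by
    intro m; ring
  have h1 : Summable fun m : ℤ => (1 - u) * (a (m - 1)) ^ 2 := (shift_summable hS).mul_left _
  have h2 : Summable fun m : ℤ => u * (a m) ^ 2 := hS.mul_left _
  have h3 : Summable fun m : ℤ => u * (1 - u) * (a m - a (m - 1)) ^ 2 :=
    (diff_summable hS).mul_left _
  rw [step1, tsum_congr hptwise, Summable.tsum_sub (h1.add h2) h3, Summable.tsum_add h1 h2,
    tsum_mul_left, tsum_mul_left, tsum_mul_left, shift_tsum]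
  have hu0 : 0 ≤ u := Int.fract_nonneg t
  ring

end Main

/-- for an exponentially decaying, not identically zero `a : ℤ → ℝ`,
the function `σ₂²` attains its absolute maximum over `ℝ` exactly at the integers,
and the maximal value is `Σ_k a_k²`. -/
theorem sigma2sq_max_at_integers (a : ℤ → ℝ) (c lam : ℝ)
    (hc : 0 < c) (hlam0 : 0 < lam) (hlam1 : lam < 1)
    (hdecay : ∀ k : ℤ, |a k| ≤ c * lam ^ k.natAbs)
    (hne : ∃ k : ℤ, a k ≠ 0) :
    (∀ t : ℝ, sigma2sq a t ≤ ∑' k : ℤ, (a k) ^ 2) ∧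
    (∀ l : ℤ, sigma2sq a (l : ℝ) = ∑' k : ℤ, (a k) ^ 2) ∧
    (∀ t : ℝ, sigma2sq a t = ∑' k : ℤ, (a k) ^ 2 → ∃ l : ℤ, t = (l : ℝ)) := by
  -- Summability of `a k ^ 2`
  have hS : Summable fun k : ℤ => (a k) ^ 2 := by
    have hgeo : Summable fun n : ℕ => c ^ 2 * (lam ^ 2) ^ n :=
      (summable_geometric_of_lt_one (by positivity) (by nlinarith)).mul_left _
    have hbound : ∀ k : ℤ, (a k) ^ 2 ≤ c ^ 2 * (lam ^ 2) ^ k.natAbs := by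
      intro k
      have hd := hdecay k
      have h0 : 0 ≤ |a k| := abs_nonneg _
      have hp : (0 : ℝ) ≤ lam ^ k.natAbs := by positivity
      calc (a k) ^ 2 = |a k| ^ 2 := (sq_abs _).symm
        _ ≤ (c * lam ^ k.natAbs) ^ 2 := by nlinarith
        _ = c ^ 2 * (lam ^ 2) ^ k.natAbs := by rw [mul_pow, ← pow_mul, ← pow_mul, Nat.mul_comm]
    refine Summable.of_nonneg_of_le (fun k => sq_nonneg _) hbound ?_
    refine Summable.of_nat_of_neg ?_ ?_
    · simpa using hgeo
    · simpa using hgeo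
  set S : ℝ := ∑' k : ℤ, (a k) ^ 2 with hSdef
  set D : ℝ := ∑' m : ℤ, (a m - a (m - 1)) ^ 2 with hDdef
  -- D > 0
  have hD : 0 < D := by
    have hex : ∃ m : ℤ, a m ≠ a (m - 1) := by
      by_contra hcon
      push_neg at hcon
      have hconst : ∀ k : ℤ, a k = a 0 := by
        intro k
        induction k using Int.induction_on with
        | zero => rfl
        | succ n ih =>
            have h := hcon ((n : ℤ) + 1)
            rw [show ((n : ℤ) + 1 - 1) = (n : ℤ) by ring] at h
            exact h.trans ih
        | pred n ih =>
            have h := hcon (-(n : ℤ))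
            exact h.symm.trans ih
      obtain ⟨k, hk⟩ := hne
      have ha0 : a 0 ≠ 0 := fun h => hk (by rw [hconst k, h])
      have hpos : 0 < |a 0| / c := div_pos (abs_pos.mpr ha0) hc
      obtain ⟨n, hn⟩ := exists_pow_lt_of_lt_one hpos hlam1
      have := hdecay (n : ℤ)
      rw [hconst (n : ℤ)] at this
      have hnat : ((n : ℤ)).natAbs = n := Int.natAbs_natCast n
      rw [hnat] at this
      have : |a 0| ≤ c * lam ^ n := this
      have : c * lam ^ n < |a 0| := by
        calc c * lam ^ n < c * (|a 0| / c) := by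
              exact mul_lt_mul_of_pos_left hn hc
          _ = |a 0| := by field_simp
      linarith
    obtain ⟨m, hm⟩ := hex
    refine Summable.tsum_pos (diff_summable hS) (fun i => sq_nonneg _) m ?_
    have hne' : a m - a (m - 1) ≠ 0 := sub_ne_zero.mpr hm
    exact lt_of_le_of_ne (sq_nonneg _) (Ne.symm (pow_ne_zero 2 hne'))
  have hformula : ∀ t : ℝ, sigma2sq a t = S - Int.fract t * (1 - Int.fract t) * D :=
    fun t => sigma2sq_formula hS t
  refine ⟨?_, ?_, ?_⟩
  · intro t
    rw [hformula t]
    have hu0 : 0 ≤ Int.fract t := Int.fract_nonneg t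
    have hu1 : Int.fract t < 1 := Int.fract_lt_one t
    nlinarith [mul_nonneg (mul_nonneg hu0 (by linarith : (0:ℝ) ≤ 1 - Int.fract t)) hD.le]
  · intro l
    rw [hformula l, Int.fract_intCast]
    ring
  · intro t ht
    rw [hformula t] at ht
    have hu0 : 0 ≤ Int.fract t := Int.fract_nonneg t
    have hu1 : Int.fract t < 1 := Int.fract_lt_one t
    have h0 : Int.fract t * (1 - Int.fract t) * D = 0 := by linarith
    have hfr : Int.fract t = 0 := by
      rcases mul_eq_zero.mp h0 with h | h
      · rcases mul_eq_zero.mp h with h' | h'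
        · exact h'
        · linarith
      · exact absurd h (ne_of_gt hD)
    refine ⟨⌊t⌋, ?_⟩
    have := Int.floor_add_fract t
    rw [hfr, add_zero] at this
    exact this.symm

end
end

section
/- Let a : ℤ → ℝ be square-summable and set M = Σ_{k∈ℤ} (a_k − a_{k−1})² − Σ_{k∈ℤ} (a_k − a_{k−1})(a_{k−1} − a_{k−2}). Then for every t ∈ [0,1], Σ_{k∈ℤ} ( (1/2)(a_k − 2a_{k−1} + a_{k−2}) t² + (a_{k−1} − a_{k−2}) t + (1/2)(a_{k−1} + a_{k−2}) )² = (M/2) t² (1 − t)² + (1/4) Σ_{k∈ℤ} (a_k + a_{k−1})². -/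
private lemma tsum_three' {f g h : ℤ → ℝ} (hf : Summable f) (hg : Summable g)
    (hh : Summable h) :
    ∑' k : ℤ, (f k + (g k + h k)) = (∑' k, f k) + ((∑' k, g k) + (∑' k, h k)) := by
  rw [Summable.tsum_add hf (hg.add hh), Summable.tsum_add hg hh]

private lemma tsum_four' {f g h p : ℤ → ℝ} (hf : Summable f) (hg : Summable g)
    (hh : Summable h) (hp : Summable p) :
    ∑' k : ℤ, (f k + (g k + (h k + p k))) =
      (∑' k, f k) + ((∑' k, g k) + ((∑' k, h k) + (∑' k, p k))) := by
  rw [Summable.tsum_add hf (hg.add (hh.add hp)), Summable.tsum_add hg (hh.add hp), Summable.tsum_add hh hp]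

private lemma tsum_six' {f g h p q r : ℤ → ℝ} (hf : Summable f) (hg : Summable g)
    (hh : Summable h) (hp : Summable p) (hq : Summable q) (hr : Summable r) :
    ∑' k : ℤ, (f k + (g k + (h k + (p k + (q k + r k))))) =
      (∑' k, f k) + ((∑' k, g k) + ((∑' k, h k) + ((∑' k, p k) +
        ((∑' k, q k) + (∑' k, r k))))) := by
  rw [Summable.tsum_add hf (hg.add (hh.add (hp.add (hq.add hr)))),
      Summable.tsum_add hg (hh.add (hp.add (hq.add hr))),
      Summable.tsum_add hh (hp.add (hq.add hr)), Summable.tsum_add hp (hq.add hr), Summable.tsum_add hq hr]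

/-- For a square-summable sequence `a : ℤ → ℝ`, with
`M = Σ_k (a_k − a_{k−1})² − Σ_k (a_k − a_{k−1})(a_{k−1} − a_{k−2})`, for every `t ∈ [0,1]`,
`Σ_k ((1/2)(a_k − 2a_{k−1} + a_{k−2})t² + (a_{k−1} − a_{k−2})t + (1/2)(a_{k−1} + a_{k−2}))²
  = (M/2)t²(1−t)² + (1/4)Σ_k (a_k + a_{k−1})²`. -/
theorem variance_identity_quadratic_spline (a : ℤ → ℝ)
    (ha : Summable fun k : ℤ => (a k) ^ 2)
    (M : ℝ)
    (hM : M = (∑' k : ℤ, (a k - a (k - 1)) ^ 2) -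
        ∑' k : ℤ, (a k - a (k - 1)) * (a (k - 1) - a (k - 2))) :
    ∀ t ∈ Set.Icc (0 : ℝ) 1,
      ∑' k : ℤ, ((1 / 2) * (a k - 2 * a (k - 1) + a (k - 2)) * t ^ 2 +
          (a (k - 1) - a (k - 2)) * t + (1 / 2) * (a (k - 1) + a (k - 2))) ^ 2 =
        M / 2 * t ^ 2 * (1 - t) ^ 2 + (1 / 4) * ∑' k : ℤ, (a k + a (k - 1)) ^ 2 := by
  -- square-summability of shifts
  have hs : ∀ c : ℤ, Summable fun k : ℤ => (a (k - c)) ^ 2 := fun c =>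
    ha.comp_injective (fun x y hxy => by simpa using hxy : Function.Injective fun k : ℤ => k - c)
  -- summability of shifted products
  have hmul : ∀ m n : ℤ, Summable fun k : ℤ => a (k - m) * a (k - n) := by
    intro m n
    apply Summable.of_abs
    apply Summable.of_nonneg_of_le (fun k => abs_nonneg _) (fun k => ?_)
      (((hs m).add (hs n)).mul_left (1 / 2))
    rw [abs_mul]
    nlinarith [sq_nonneg (|a (k - m)| - |a (k - n)|), sq_abs (a (k - m)),
      sq_abs (a (k - n)), abs_nonneg (a (k - m)), abs_nonneg (a (k - n))]
  have sA : Summable fun k : ℤ => (a k) ^ 2 := ha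
  have sB : Summable fun k : ℤ => (a (k - 1)) ^ 2 := hs 1
  have sC : Summable fun k : ℤ => (a (k - 2)) ^ 2 := hs 2
  have sAB : Summable fun k : ℤ => a k * a (k - 1) := by
    have := hmul 0 1; simpa using this
  have sAC : Summable fun k : ℤ => a k * a (k - 2) := by
    have := hmul 0 2; simpa using this
  have sBC : Summable fun k : ℤ => a (k - 1) * a (k - 2) := hmul 1 2
  -- shift invariance of tsums
  have hshift : ∀ (f : ℤ → ℝ) (c : ℤ), ∑' k : ℤ, f (k - c) = ∑' k : ℤ, f k := by
    intro f c
    have := (Equiv.subRight c).tsum_eq f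
    simpa using this
  set S0 : ℝ := ∑' k : ℤ, (a k) ^ 2 with hS0
  set S1 : ℝ := ∑' k : ℤ, a k * a (k - 1) with hS1
  set S2 : ℝ := ∑' k : ℤ, a k * a (k - 2) with hS2
  have e1 : ∑' k : ℤ, (a (k - 1)) ^ 2 = S0 := hshift (fun k => (a k) ^ 2) 1
  have e2 : ∑' k : ℤ, (a (k - 2)) ^ 2 = S0 := hshift (fun k => (a k) ^ 2) 2
  have e3 : ∑' k : ℤ, a (k - 1) * a (k - 2) = S1 := by
    have h := hshift (fun k => a k * a (k - 1)) 1
    have hc : ∀ k : ℤ, a (k - 1) * a (k - 1 - 1) = a (k - 1) * a (k - 2) := by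
      intro k
      have : k - 1 - 1 = k - 2 := by ring
      rw [this]
    rw [← tsum_congr hc]
    exact h
  -- express the two tsums in hM
  have hA2 : ∑' k : ℤ, (a k - a (k - 1)) ^ 2 = 2 * S0 - 2 * S1 := by
    have hk : ∀ k : ℤ, (a k - a (k - 1)) ^ 2 =
        (a k) ^ 2 + ((a (k - 1)) ^ 2 + (-2) * (a k * a (k - 1))) := fun k => by ring
    rw [tsum_congr hk, tsum_three' sA sB (sAB.mul_left _), tsum_mul_left, e1]
    ring
  have hX : ∑' k : ℤ, (a k - a (k - 1)) * (a (k - 1) - a (k - 2)) =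
      2 * S1 - S0 - S2 := by
    have hk : ∀ k : ℤ, (a k - a (k - 1)) * (a (k - 1) - a (k - 2)) =
        a k * a (k - 1) + ((-1) * (a k * a (k - 2)) +
          ((-1) * ((a (k - 1)) ^ 2) + a (k - 1) * a (k - 2))) := fun k => by ring
    rw [tsum_congr hk, tsum_four' sAB (sAC.mul_left _) (sB.mul_left _) sBC,
      tsum_mul_left, tsum_mul_left, e1, e3]
    ring
  have hMval : M = 3 * S0 - 4 * S1 + S2 := by rw [hM, hA2, hX]; ring
  -- the last tsum on the RHS
  have hR : ∑' k : ℤ, (a k + a (k - 1)) ^ 2 = 2 * S0 + 2 * S1 := by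
    have hk : ∀ k : ℤ, (a k + a (k - 1)) ^ 2 =
        (a k) ^ 2 + ((a (k - 1)) ^ 2 + 2 * (a k * a (k - 1))) := fun k => by ring
    rw [tsum_congr hk, tsum_three' sA sB (sAB.mul_left _), tsum_mul_left, e1]
    ring
  intro t _
  -- expand the quadratic summand as a linear combination of six summable families
  have key : ∀ k : ℤ,
      ((1 / 2) * (a k - 2 * a (k - 1) + a (k - 2)) * t ^ 2 +
          (a (k - 1) - a (k - 2)) * t + (1 / 2) * (a (k - 1) + a (k - 2))) ^ 2 =
        (t ^ 2 / 2) ^ 2 * ((a k) ^ 2) +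
          ((-t ^ 2 + t + 1 / 2) ^ 2 * ((a (k - 1)) ^ 2) +
            ((t ^ 2 / 2 - t + 1 / 2) ^ 2 * ((a (k - 2)) ^ 2) +
              ((2 * (t ^ 2 / 2) * (-t ^ 2 + t + 1 / 2)) * (a k * a (k - 1)) +
                ((2 * (t ^ 2 / 2) * (t ^ 2 / 2 - t + 1 / 2)) * (a k * a (k - 2)) +
                  (2 * (-t ^ 2 + t + 1 / 2) * (t ^ 2 / 2 - t + 1 / 2)) *
                    (a (k - 1) * a (k - 2)))))) := fun k => by ring
  rw [tsum_congr key,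
    tsum_six' (sA.mul_left _) (sB.mul_left _) (sC.mul_left _) (sAB.mul_left _)
      (sAC.mul_left _) (sBC.mul_left _),
    tsum_mul_left, tsum_mul_left, tsum_mul_left, tsum_mul_left, tsum_mul_left,
    tsum_mul_left, e1, e2, e3, hR, hMval]
  ring
end

section
/- Let a : ℤ → ℝ be square-summable and set A = Σ_{k∈ℤ} (a_k − 3a_{k−1} + 3a_{k−2} − a_{k−3})² and C = 3 Σ_{k∈ℤ} (a_k − 2a_{k−1} + a_{k−2})². Then for every t ∈ [0,1], 36 Σ_{k∈ℤ} ( (1/6)( (a_k − 3a_{k−1} + 3a_{k−2} − a_{k−3}) t³ + 3(a_{k−1} − 2a_{k−2} + a_{k−3}) t² + 3(a_{k−1} − a_{k−3}) t + (a_{k−1} + 4a_{k−2} + a_{k−3}) ) )² = t²(1 − t)² ( t(t − 1) A − C ) + Σ_{k∈ℤ} (a_{k−1} + 4a_{k−2} + a_{k−3})². -/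
private lemma shift_diag' (a : ℤ → ℝ) (m : ℤ) :
    ∑' k : ℤ, a (k - m) * a (k - m) = ∑' k : ℤ, a k * a k := by
  have h := (Equiv.subRight m).tsum_eq (fun k : ℤ => a k * a k)
  rw [← h]
  exact tsum_congr fun k => by simp [Equiv.subRight_apply]

private lemma shift_off' (a : ℤ → ℝ) (m n j : ℤ) (h : n = m + j) :
    ∑' k : ℤ, a (k - m) * a (k - n) = ∑' k : ℤ, a k * a (k - j) := by
  subst h
  have h := (Equiv.subRight m).tsum_eq (fun k : ℤ => a k * a (k - j))
  rw [← h]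
  exact tsum_congr fun k => by simp [Equiv.subRight_apply, sub_sub]

private lemma key_quadratic (a : ℤ → ℝ) (ha : Summable fun k : ℤ => (a k) ^ 2)
    (c0 c1 c2 c3 : ℝ) :
    ∑' k : ℤ, (c0 * a k + c1 * a (k - 1) + c2 * a (k - 2) + c3 * a (k - 3)) ^ 2
      = (c0^2 + c1^2 + c2^2 + c3^2) * (∑' k : ℤ, a k * a k)
        + (2 * (c0 * c1 + c1 * c2 + c2 * c3)) * (∑' k : ℤ, a k * a (k - 1))
        + (2 * (c0 * c2 + c1 * c3)) * (∑' k : ℤ, a k * a (k - 2))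
        + (2 * (c0 * c3)) * (∑' k : ℤ, a k * a (k - 3)) := by
  have hsq : ∀ c : ℤ, Summable fun k : ℤ => (a (k - c)) ^ 2 := by
    intro c
    exact ((Equiv.subRight c).summable_iff (f := fun k : ℤ => (a k) ^ 2)).mpr ha
  have hp : ∀ m n : ℤ, Summable fun k : ℤ => a (k - m) * a (k - n) := by
    intro m n
    have hb : Summable fun k : ℤ => (1/2 : ℝ) * ((a (k - m)) ^ 2 + (a (k - n)) ^ 2) :=
      ((hsq m).add (hsq n)).mul_left _
    apply Summable.of_abs
    refine Summable.of_nonneg_of_le (fun k => abs_nonneg _) (fun k => ?_) hb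
    have h1 := abs_mul (a (k - m)) (a (k - n))
    nlinarith [sq_nonneg (|a (k - m)| - |a (k - n)|), sq_abs (a (k - m)), sq_abs (a (k - n)),
      abs_nonneg (a (k - m)), abs_nonneg (a (k - n))]
  have hp00 : Summable fun k : ℤ => a k * a k := by
    have := hp 0 0; simpa using this
  have hp0 : ∀ j : ℤ, Summable fun k : ℤ => a k * a (k - j) := by
    intro j; have := hp 0 j; simpa using this
  have e : ∀ k : ℤ, (c0 * a k + c1 * a (k - 1) + c2 * a (k - 2) + c3 * a (k - 3)) ^ 2
      = c0^2 * (a k * a k) + (c1^2 * (a (k - 1) * a (k - 1)) + (c2^2 * (a (k - 2) * a (k - 2)) +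
        (c3^2 * (a (k - 3) * a (k - 3)) + ((2 * c0 * c1) * (a k * a (k - 1)) +
        ((2 * c1 * c2) * (a (k - 1) * a (k - 2)) + ((2 * c2 * c3) * (a (k - 2) * a (k - 3)) +
        ((2 * c0 * c2) * (a k * a (k - 2)) + ((2 * c1 * c3) * (a (k - 1) * a (k - 3)) +
        (2 * c0 * c3) * (a k * a (k - 3)))))))))) := fun k => by ring
  have s10 := ((hp0 3).mul_left (2 * c0 * c3))
  have s9 := ((hp 1 3).mul_left (2 * c1 * c3))
  have s8 := ((hp0 2).mul_left (2 * c0 * c2))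
  have s7 := ((hp 2 3).mul_left (2 * c2 * c3))
  have s6 := ((hp 1 2).mul_left (2 * c1 * c2))
  have s5 := ((hp0 1).mul_left (2 * c0 * c1))
  have s4 := ((hp 3 3).mul_left (c3^2))
  have s3 := ((hp 2 2).mul_left (c2^2))
  have s2 := ((hp 1 1).mul_left (c1^2))
  have s1 := (hp00.mul_left (c0^2))
  rw [tsum_congr e,
    Summable.tsum_add s1 (s2.add (s3.add (s4.add (s5.add (s6.add (s7.add (s8.add (s9.add s10)))))))),
    Summable.tsum_add s2 (s3.add (s4.add (s5.add (s6.add (s7.add (s8.add (s9.add s10))))))),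
    Summable.tsum_add s3 (s4.add (s5.add (s6.add (s7.add (s8.add (s9.add s10)))))),
    Summable.tsum_add s4 (s5.add (s6.add (s7.add (s8.add (s9.add s10))))),
    Summable.tsum_add s5 (s6.add (s7.add (s8.add (s9.add s10)))),
    Summable.tsum_add s6 (s7.add (s8.add (s9.add s10))),
    Summable.tsum_add s7 (s8.add (s9.add s10)),
    Summable.tsum_add s8 (s9.add s10),
    Summable.tsum_add s9 s10]
  simp only [tsum_mul_left]
  rw [shift_diag' a 1, shift_diag' a 2, shift_diag' a 3,
    shift_off' a 1 2 1 (by norm_num), shift_off' a 2 3 1 (by norm_num),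
    shift_off' a 1 3 2 (by norm_num)]
  ring

/-- For a square-summable sequence `a : ℤ → ℝ`, with
`A = Σ_k (a_k − 3a_{k−1} + 3a_{k−2} − a_{k−3})²` and `C = 3 Σ_k (a_k − 2a_{k−1} + a_{k−2})²`,
for every `t ∈ [0,1]`,
`36 Σ_k ((1/6)((a_k − 3a_{k−1} + 3a_{k−2} − a_{k−3})t³ + 3(a_{k−1} − 2a_{k−2} + a_{k−3})t²
   + 3(a_{k−1} − a_{k−3})t + (a_{k−1} + 4a_{k−2} + a_{k−3})))²
  = t²(1−t)²(t(t−1)A − C) + Σ_k (a_{k−1} + 4a_{k−2} + a_{k−3})²`. -/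
theorem variance_identity_cubic_spline (a : ℤ → ℝ)
    (ha : Summable fun k : ℤ => (a k) ^ 2)
    (A C : ℝ)
    (hA : A = ∑' k : ℤ, (a k - 3 * a (k - 1) + 3 * a (k - 2) - a (k - 3)) ^ 2)
    (hC : C = 3 * ∑' k : ℤ, (a k - 2 * a (k - 1) + a (k - 2)) ^ 2) :
    ∀ t ∈ Set.Icc (0 : ℝ) 1,
      36 * ∑' k : ℤ, ((1 / 6) * ((a k - 3 * a (k - 1) + 3 * a (k - 2) - a (k - 3)) * t ^ 3 +
          3 * (a (k - 1) - 2 * a (k - 2) + a (k - 3)) * t ^ 2 +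
          3 * (a (k - 1) - a (k - 3)) * t +
          (a (k - 1) + 4 * a (k - 2) + a (k - 3)))) ^ 2 =
        t ^ 2 * (1 - t) ^ 2 * (t * (t - 1) * A - C) +
          ∑' k : ℤ, (a (k - 1) + 4 * a (k - 2) + a (k - 3)) ^ 2 := by
  intro t _
  have hA' : A = (1^2 + (-3:ℝ)^2 + 3^2 + (-1:ℝ)^2) * (∑' k : ℤ, a k * a k)
        + (2 * (1 * (-3) + (-3) * 3 + 3 * (-1))) * (∑' k : ℤ, a k * a (k - 1))
        + (2 * (1 * 3 + (-3) * (-1))) * (∑' k : ℤ, a k * a (k - 2))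
        + (2 * (1 * (-1))) * (∑' k : ℤ, a k * a (k - 3)) := by
    rw [hA, show (∑' k : ℤ, (a k - 3 * a (k - 1) + 3 * a (k - 2) - a (k - 3)) ^ 2)
        = ∑' k : ℤ, (1 * a k + (-3) * a (k - 1) + 3 * a (k - 2) + (-1) * a (k - 3)) ^ 2 from
        tsum_congr fun k => by ring, key_quadratic a ha 1 (-3) 3 (-1)]
  have hC' : C = 3 * ((1^2 + (-2:ℝ)^2 + 1^2 + (0:ℝ)^2) * (∑' k : ℤ, a k * a k)
        + (2 * (1 * (-2) + (-2) * 1 + 1 * 0)) * (∑' k : ℤ, a k * a (k - 1))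
        + (2 * (1 * 1 + (-2) * 0)) * (∑' k : ℤ, a k * a (k - 2))
        + (2 * (1 * 0)) * (∑' k : ℤ, a k * a (k - 3))) := by
    rw [hC, show (∑' k : ℤ, (a k - 2 * a (k - 1) + a (k - 2)) ^ 2)
        = ∑' k : ℤ, (1 * a k + (-2) * a (k - 1) + 1 * a (k - 2) + 0 * a (k - 3)) ^ 2 from
        tsum_congr fun k => by ring, key_quadratic a ha 1 (-2) 1 0]
  have hP : (∑' k : ℤ, (a (k - 1) + 4 * a (k - 2) + a (k - 3)) ^ 2)
      = ((0:ℝ)^2 + 1^2 + 4^2 + 1^2) * (∑' k : ℤ, a k * a k)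
        + (2 * (0 * 1 + 1 * 4 + 4 * 1)) * (∑' k : ℤ, a k * a (k - 1))
        + (2 * (0 * 4 + 1 * 1)) * (∑' k : ℤ, a k * a (k - 2))
        + (2 * (0 * 1)) * (∑' k : ℤ, a k * a (k - 3)) := by
    rw [show (∑' k : ℤ, (a (k - 1) + 4 * a (k - 2) + a (k - 3)) ^ 2)
        = ∑' k : ℤ, (0 * a k + 1 * a (k - 1) + 4 * a (k - 2) + 1 * a (k - 3)) ^ 2 from
        tsum_congr fun k => by ring, key_quadratic a ha 0 1 4 1]
  have hL : (∑' k : ℤ, ((1 / 6) * ((a k - 3 * a (k - 1) + 3 * a (k - 2) - a (k - 3)) * t ^ 3 +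
          3 * (a (k - 1) - 2 * a (k - 2) + a (k - 3)) * t ^ 2 +
          3 * (a (k - 1) - a (k - 3)) * t +
          (a (k - 1) + 4 * a (k - 2) + a (k - 3)))) ^ 2)
      = (1/36) * ∑' k : ℤ, ((t^3) * a k + (-3*t^3 + 3*t^2 + 3*t + 1) * a (k - 1)
          + (3*t^3 - 6*t^2 + 4) * a (k - 2) + (-t^3 + 3*t^2 - 3*t + 1) * a (k - 3)) ^ 2 := by
    rw [← tsum_mul_left]
    exact tsum_congr fun k => by ring
  rw [hL, key_quadratic a ha (t^3) (-3*t^3 + 3*t^2 + 3*t + 1) (3*t^3 - 6*t^2 + 4)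
    (-t^3 + 3*t^2 - 3*t + 1), hA', hC', hP]
  ring
end

section
/- Let a : ℤ → ℝ be not identically zero and satisfy |a_k| ≤ c λ^{|k|} for all k ∈ ℤ, for some c > 0 and 0 < λ < 1. Then M := Σ_{k∈ℤ} (a_k − a_{k−1})² − Σ_{k∈ℤ} (a_k − a_{k−1})(a_{k−1} − a_{k−2}) > 0. -/
/-- If a function on ℤ satisfies `f k = f (k-1)` for all `k` and tends to `0` along ℕ,
then it is identically zero. -/
lemma const_tendsto_zero_eq_zero (f : ℤ → ℝ)
    (hconst : ∀ k : ℤ, f k = f (k - 1))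
    (h0 : Filter.Tendsto (fun n : ℕ => f n) Filter.atTop (nhds 0)) :
    ∀ k : ℤ, f k = 0 := by
  have hall : ∀ k : ℤ, f k = f 0 := by
    intro k
    induction k using Int.induction_on with
    | zero => rfl
    | succ n ih => have := hconst (n + 1); simpa [this] using ih
    | pred n ih =>
        have h := hconst (-(n : ℤ)); rw [h] at ih
        exact ih
  have hc : Filter.Tendsto (fun _ : ℕ => f 0) Filter.atTop (nhds (f 0)) :=
    tendsto_const_nhds
  have : Filter.Tendsto (fun n : ℕ => f n) Filter.atTop (nhds (f 0)) := by
    simpa [hall] using hc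
  have hf0 : f 0 = 0 := tendsto_nhds_unique this h0
  intro k; rw [hall k, hf0]

set_option maxHeartbeats 2000000 in
/-- If `a : ℤ → ℝ` is not identically zero and `|a_k| ≤ c λ^{|k|}` with
`c > 0`, `0 < λ < 1`, then
`M := Σ_k (a_k − a_{k−1})² − Σ_k (a_k − a_{k−1})(a_{k−1} − a_{k−2}) > 0`. -/
theorem quadratic_spline_M_pos (a : ℤ → ℝ) (c lam : ℝ)
    (hc : 0 < c) (hlam0 : 0 < lam) (hlam1 : lam < 1)
    (hdecay : ∀ k : ℤ, |a k| ≤ c * lam ^ k.natAbs)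
    (hne : ∃ k : ℤ, a k ≠ 0) :
    0 < (∑' k : ℤ, (a k - a (k - 1)) ^ 2) -
        ∑' k : ℤ, (a k - a (k - 1)) * (a (k - 1) - a (k - 2)) := by
  obtain ⟨b, hbdef⟩ : ∃ b : ℤ → ℝ, ∀ k, b k = a k - a (k - 1) :=
    ⟨fun k => a k - a (k - 1), fun _ => rfl⟩
  -- geometric summability over ℤ
  have hgeo : Summable (fun k : ℤ => lam ^ k.natAbs) := by
    apply Summable.of_nat_of_neg <;>
      · simpa using summable_geometric_of_lt_one hlam0.le hlam1
  have hgeo' : Summable (fun k : ℤ => lam ^ (k - 1).natAbs) :=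
    (Equiv.subRight (1 : ℤ)).summable_iff.mpr hgeo
  have hbd : ∀ k : ℤ, |b k| ≤ c * lam ^ k.natAbs + c * lam ^ (k - 1).natAbs := by
    intro k
    rw [hbdef]
    calc |a k - a (k - 1)| ≤ |a k| + |a (k - 1)| := abs_sub _ _
    _ ≤ _ := add_le_add (hdecay k) (hdecay (k - 1))
  have habs : Summable (fun k : ℤ => |b k|) := by
    apply Summable.of_nonneg_of_le (fun k => abs_nonneg _) hbd
    exact ((hgeo.mul_left c).add (hgeo'.mul_left c))
  have hB : ∀ k : ℤ, |b k| ≤ 2 * c := by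
    intro k
    have h1 : lam ^ k.natAbs ≤ 1 := pow_le_one₀ hlam0.le hlam1.le
    have h2 : lam ^ (k - 1).natAbs ≤ 1 := pow_le_one₀ hlam0.le hlam1.le
    have h3 := hbd k
    have h4 : c * lam ^ k.natAbs ≤ c * 1 := by
      exact mul_le_mul_of_nonneg_left h1 hc.le
    have h5 : c * lam ^ (k - 1).natAbs ≤ c * 1 := by
      exact mul_le_mul_of_nonneg_left h2 hc.le
    linarith
  have habs' : Summable (fun k : ℤ => |b (k - 1)|) :=
    (Equiv.subRight (1 : ℤ)).summable_iff.mpr habs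
  -- summability of the various series
  have S1 : Summable (fun k : ℤ => b k ^ 2) := by
    refine Summable.of_nonneg_of_le (fun k => sq_nonneg _) (fun k => ?_)
      (habs.mul_left (2 * c))
    have : b k ^ 2 = |b k| * |b k| := by rw [← abs_mul, sq, abs_mul_self]
    rw [this]
    exact mul_le_mul_of_nonneg_right (hB k) (abs_nonneg _)
  have S2 : Summable (fun k : ℤ => b k * b (k - 1)) := by
    apply Summable.of_norm
    refine Summable.of_nonneg_of_le (fun k => norm_nonneg _) (fun k => ?_)
      (habs'.mul_left (2 * c))
    rw [Real.norm_eq_abs, abs_mul]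
    exact mul_le_mul_of_nonneg_right (hB k) (abs_nonneg _)
  have S4 : Summable (fun k : ℤ => b (k - 1) ^ 2) :=
    (Equiv.subRight (1 : ℤ)).summable_iff.mpr S1
  have S3 : Summable (fun k : ℤ => (b k - b (k - 1)) ^ 2) := by
    have : ∀ k : ℤ, (b k - b (k - 1)) ^ 2
        = b k ^ 2 - 2 * (b k * b (k - 1)) + b (k - 1) ^ 2 := fun k => by ring
    simpa [this] using (S1.sub (S2.mul_left 2)).add S4
  -- translation invariance
  have hshift : (∑' k : ℤ, b (k - 1) ^ 2) = ∑' k : ℤ, b k ^ 2 :=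
    (Equiv.subRight (1 : ℤ)).tsum_eq (fun k => b k ^ 2)
  -- key identity
  have key : (∑' k : ℤ, (b k - b (k - 1)) ^ 2)
      = (∑' k : ℤ, b k ^ 2) - 2 * (∑' k : ℤ, b k * b (k - 1))
        + ∑' k : ℤ, b (k - 1) ^ 2 := by
    have h : ∀ k : ℤ, (b k - b (k - 1)) ^ 2
        = (b k ^ 2 - 2 * (b k * b (k - 1))) + b (k - 1) ^ 2 := fun k => by ring
    rw [tsum_congr h, Summable.tsum_add (S1.sub (S2.mul_left 2)) S4,
      Summable.tsum_sub S1 (S2.mul_left 2), tsum_mul_left]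
  -- strict positivity of ∑ (b k - b (k-1))²
  have hpos : 0 < ∑' k : ℤ, (b k - b (k - 1)) ^ 2 := by
    obtain ⟨k₀, hk₀⟩ : ∃ k : ℤ, b k ≠ b (k - 1) := by
      by_contra hcon
      push_neg at hcon
      -- b is constant; show b ≡ 0, then a constant, then a ≡ 0.
      have hbz : ∀ k : ℤ, b k = 0 := by
        apply const_tendsto_zero_eq_zero b hcon
        have hten : Filter.Tendsto b Filter.cofinite (nhds 0) :=
          habs.of_abs.tendsto_cofinite_zero
        have hcast : Filter.Tendsto (fun n : ℕ => (n : ℤ)) Filter.atTop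
            Filter.cofinite := by
          rw [← Nat.cofinite_eq_atTop]
          exact (Nat.cast_injective : Function.Injective (Nat.cast : ℕ → ℤ)).tendsto_cofinite
        exact hten.comp hcast
      have haz : ∀ k : ℤ, a k = 0 := by
        apply const_tendsto_zero_eq_zero a
          (fun k => by have := hbz k; rw [hbdef] at this; linarith)
        apply squeeze_zero_norm (a := fun n : ℕ => c * lam ^ n)
          (fun n => by simpa [Real.norm_eq_abs] using hdecay (n : ℤ))
        have := (tendsto_pow_atTop_nhds_zero_of_lt_one hlam0.le hlam1).const_mul c
        simpa using this
      obtain ⟨k, hk⟩ := hne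
      exact hk (haz k)
    exact Summable.tsum_pos S3 (fun k => sq_nonneg _) k₀ (by have h := sub_ne_zero.mpr hk₀; positivity)
  -- conclude
  have hgoal : (∑' k : ℤ, (a k - a (k - 1)) ^ 2) -
        (∑' k : ℤ, (a k - a (k - 1)) * (a (k - 1) - a (k - 2)))
      = (∑' k : ℤ, b k ^ 2) - ∑' k : ℤ, b k * b (k - 1) := by
    have e1 : (∑' k : ℤ, (a k - a (k - 1)) ^ 2) = ∑' k : ℤ, b k ^ 2 :=
      tsum_congr fun k => by rw [hbdef]
    have e2 : (∑' k : ℤ, (a k - a (k - 1)) * (a (k - 1) - a (k - 2)))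
        = ∑' k : ℤ, b k * b (k - 1) := by
      refine tsum_congr fun k => ?_
      have h2 : k - 1 - 1 = k - 2 := by ring
      rw [hbdef k, hbdef (k - 1), h2]
    rw [e1, e2]
  rw [hgoal]
  rw [hshift] at key
  linarith
end

section
/- Let φ : ℝ → ℝ satisfy |φ(x)| ≤ c₁ λ^{c₂|x|} for all x ∈ ℝ, for some c₁, c₂ > 0 and 0 < λ < 1. Then there exists a finite constant C such that for every s ∈ ℝ and every v > 0, | Σ_{k∈ℤ} φ(s − k + v) φ(s − k) | ≤ C λ^{c₂ v / 2}. -/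
set_option maxHeartbeats 2000000


/-- if `|φ(x)| ≤ c₁ λ^{c₂|x|}` with `c₁, c₂ > 0`, `0 < λ < 1`, then there is a
finite constant `C` such that for all `s ∈ ℝ` and `v > 0`,
`|Σ_k φ(s − k + v) φ(s − k)| ≤ C λ^{c₂ v / 2}`. -/
theorem cyclostationary_covariance_decay (phi : ℝ → ℝ) (c₁ c₂ lam : ℝ)
    (hc₁ : 0 < c₁) (hc₂ : 0 < c₂) (hlam0 : 0 < lam) (hlam1 : lam < 1)
    (hphi : ∀ x : ℝ, |phi x| ≤ c₁ * lam ^ (c₂ * |x|)) :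
    ∃ C : ℝ, ∀ s v : ℝ, 0 < v →
      |∑' k : ℤ, phi (s - (k : ℝ) + v) * phi (s - (k : ℝ))| ≤ C * lam ^ (c₂ * v / 2) := by
  set r : ℝ := lam ^ (c₂ / 2) with hrdef
  have hr0 : 0 < r := Real.rpow_pos_of_pos hlam0 _
  have hr1 : r < 1 := Real.rpow_lt_one hlam0.le hlam1 (by positivity)
  -- summability of geometric over ℤ
  have hgs : Summable (fun n : ℤ => r ^ n.natAbs) := by
    apply Summable.of_nat_of_neg
    · simpa using summable_geometric_of_lt_one hr0.le hr1
    · simpa using summable_geometric_of_lt_one hr0.le hr1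
  refine ⟨c₁ ^ 2 * r⁻¹ * ∑' n : ℤ, r ^ n.natAbs, ?_⟩
  intro s v hv
  set m : ℤ := ⌊s⌋ with hm
  have hsum2 : Summable (fun k : ℤ => r ^ (k - m).natAbs) :=
    ((Equiv.subRight m).summable_iff).mpr hgs
  -- pointwise bound
  have key : ∀ k : ℤ, |phi (s - (k : ℝ) + v) * phi (s - (k : ℝ))|
      ≤ c₁ ^ 2 * lam ^ (c₂ * v / 2) * (r⁻¹ * r ^ (k - m).natAbs) := by
    intro k
    set a : ℝ := s - (k : ℝ) with ha
    have h1 : |phi (a + v) * phi a| ≤ c₁ ^ 2 * lam ^ (c₂ * (|a + v| + |a|)) := by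
      rw [abs_mul]
      calc |phi (a + v)| * |phi a|
          ≤ (c₁ * lam ^ (c₂ * |a + v|)) * (c₁ * lam ^ (c₂ * |a|)) := by
            apply mul_le_mul (hphi _) (hphi _) (abs_nonneg _)
            positivity
        _ = c₁ ^ 2 * lam ^ (c₂ * (|a + v| + |a|)) := by
            rw [mul_add, Real.rpow_add hlam0]; ring
    have habs : c₂ * v / 2 + c₂ * |a| / 2 ≤ c₂ * (|a + v| + |a|) := by
      have h2 : v ≤ |a + v| + |a| := by
        linarith [le_abs_self (a + v), neg_abs_le a]
      have h2' : v / 2 + |a| / 2 ≤ |a + v| + |a| := by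
        linarith [abs_nonneg (a + v)]
      calc c₂ * v / 2 + c₂ * |a| / 2 = c₂ * (v / 2 + |a| / 2) := by ring
        _ ≤ c₂ * (|a + v| + |a|) := mul_le_mul_of_nonneg_left h2' hc₂.le
    have h4 : lam ^ (c₂ * (|a + v| + |a|)) ≤ lam ^ (c₂ * v / 2 + c₂ * |a| / 2) :=
      Real.rpow_le_rpow_of_exponent_ge hlam0 hlam1.le habs
    have h5 : lam ^ (c₂ * v / 2 + c₂ * |a| / 2)
        = lam ^ (c₂ * v / 2) * r ^ |a| := by
      rw [Real.rpow_add hlam0]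
      congr 1
      rw [hrdef, show c₂ * |a| / 2 = c₂ / 2 * |a| by ring, Real.rpow_mul hlam0.le]
    have h6 : r ^ |a| ≤ r⁻¹ * r ^ (k - m).natAbs := by
      have hb : ((k - m).natAbs : ℝ) - 1 ≤ |a| := by
        have h7 : |((k : ℝ) - m)| ≤ |a| + |s - m| := by
          have : (k : ℝ) - m = -(a) + (s - m) := by rw [ha]; ring
          rw [this]
          calc |(-(a) + (s - m))| ≤ |(-a)| + |s - m| := abs_add_le _ _
            _ = |a| + |s - m| := by rw [abs_neg]
        have h8 : |s - (m : ℝ)| ≤ 1 := by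
          rw [hm, abs_of_nonneg (by linarith [Int.floor_le s])]
          linarith [Int.lt_floor_add_one s]
        have h9 : ((k - m).natAbs : ℝ) = |((k : ℝ) - m)| := by
          rw [Nat.cast_natAbs]
          push_cast
          ring_nf
        linarith
      calc r ^ |a| ≤ r ^ (((k - m).natAbs : ℝ) - 1) :=
            Real.rpow_le_rpow_of_exponent_ge hr0 hr1.le hb
        _ = r⁻¹ * r ^ (k - m).natAbs := by
            rw [Real.rpow_sub hr0, Real.rpow_one, Real.rpow_natCast]
            ring
    calc |phi (a + v) * phi a| ≤ c₁ ^ 2 * lam ^ (c₂ * (|a + v| + |a|)) := h1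
      _ ≤ c₁ ^ 2 * (lam ^ (c₂ * v / 2) * r ^ |a|) := by
          rw [← h5]; exact mul_le_mul_of_nonneg_left h4 (by positivity)
      _ ≤ c₁ ^ 2 * (lam ^ (c₂ * v / 2) * (r⁻¹ * r ^ (k - m).natAbs)) := by
          apply mul_le_mul_of_nonneg_left _ (by positivity)
          exact mul_le_mul_of_nonneg_left h6 (by positivity)
      _ = c₁ ^ 2 * lam ^ (c₂ * v / 2) * (r⁻¹ * r ^ (k - m).natAbs) := by ring
  have hgsum : Summable (fun k : ℤ =>
      c₁ ^ 2 * lam ^ (c₂ * v / 2) * (r⁻¹ * r ^ (k - m).natAbs)) :=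
    (hsum2.mul_left _).mul_left _
  have hfabs : Summable (fun k : ℤ => |phi (s - (k : ℝ) + v) * phi (s - (k : ℝ))|) :=
    Summable.of_nonneg_of_le (fun k => abs_nonneg _) key hgsum
  have hf : Summable (fun k : ℤ => phi (s - (k : ℝ) + v) * phi (s - (k : ℝ))) :=
    hfabs.of_abs
  calc |∑' k : ℤ, phi (s - (k : ℝ) + v) * phi (s - (k : ℝ))|
      ≤ ∑' k : ℤ, |phi (s - (k : ℝ) + v) * phi (s - (k : ℝ))| := by
        have := norm_tsum_le_tsum_norm
          (f := fun k : ℤ => phi (s - (k : ℝ) + v) * phi (s - (k : ℝ)))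
          (by simpa only [Real.norm_eq_abs] using hfabs)
        simpa only [Real.norm_eq_abs] using this
    _ ≤ ∑' k : ℤ, c₁ ^ 2 * lam ^ (c₂ * v / 2) * (r⁻¹ * r ^ (k - m).natAbs) :=
        Summable.tsum_le_tsum key hfabs hgsum
    _ = c₁ ^ 2 * lam ^ (c₂ * v / 2) * (r⁻¹ * ∑' k : ℤ, r ^ (k - m).natAbs) := by
        rw [tsum_mul_left, tsum_mul_left]
    _ = c₁ ^ 2 * r⁻¹ * (∑' n : ℤ, r ^ n.natAbs) * lam ^ (c₂ * v / 2) := by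
        rw [show (∑' k : ℤ, r ^ (k - m).natAbs) = ∑' n : ℤ, r ^ n.natAbs from
          (Equiv.subRight m).tsum_eq (fun n : ℤ => r ^ n.natAbs)]
        ring
end
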